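/- Let n ≥ 2 and let W_1, …, W_n be positive reals. Set D = Σ_{i=1}^n W_i, C = Σ_{i=1}^n 1/W_i, and p_i = (D/W_i − (n−2))/(DC − n(n−2)) for each i ∈ [n]. Then for every i* ∈ [n], 1 + Σ_{i≠i*} p_i·(1 + W_i/W_{i*}) ≤ 3 − 2/n. (Lemma 3.2 / Theorem general_n_ev, Step 1 of the expected-value upper bound.) -/
import Mathlib


/-- **Lemma 3.2 / Theorem general_n_ev** (Step 1 of the expected-value upper bound).
With `D = Σ W i`, `C = Σ 1/W i`, and `p i = (D/W i − (n−2))/(DC − n(n−2))`,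
for every `i*`, `1 + Σ_{i≠i*} p i·(1 + W i / W i*) ≤ 3 − 2/n`. -/
theorem explicit_solution_approximation_factor (n : ℕ) (hn : 2 ≤ n)
    (W : Fin n → ℝ) (hW : ∀ i, 0 < W i)
    (D C : ℝ) (hD : D = ∑ i, W i) (hC : C = ∑ i, (W i)⁻¹)
    (p : Fin n → ℝ)
    (hp : ∀ i, p i = (D / W i - ((n : ℝ) - 2)) / (D * C - (n : ℝ) * ((n : ℝ) - 2))) :
    ∀ istar : Fin n,
      1 + ∑ i ∈ Finset.univ.erase istar, p i * (1 + W i / W istar) ≤ 3 - 2 / (n : ℝ) := by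
  intro istar
  have hn0 : (0:ℝ) < n := by positivity
  -- Cauchy-Schwarz: n^2 ≤ D * C
  have hCS : ((n:ℝ))^2 ≤ D * C := by
    have h := Finset.sum_mul_sq_le_sq_mul_sq Finset.univ
      (fun i => Real.sqrt (W i)) (fun i => Real.sqrt (W i)⁻¹)
    have h1 : ∀ i : Fin n, Real.sqrt (W i) * Real.sqrt (W i)⁻¹ = 1 := by
      intro i
      rw [Real.sqrt_inv, mul_inv_cancel₀ (ne_of_gt (Real.sqrt_pos.2 (hW i)))]
    have h2 : ∀ i : Fin n, Real.sqrt (W i) ^ 2 = W i := fun i => Real.sq_sqrt (hW i).le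
    have h3 : ∀ i : Fin n, Real.sqrt (W i)⁻¹ ^ 2 = (W i)⁻¹ := fun i =>
      Real.sq_sqrt (inv_nonneg.2 (hW i).le)
    simp only [h1, h2, h3, Finset.sum_const, Finset.card_univ, Fintype.card_fin,
      nsmul_eq_mul, mul_one] at h
    rw [hD, hC]
    calc ((n:ℝ))^2 ≤ (∑ i, W i) * (∑ i, (W i)⁻¹) := h
      _ = _ := rfl
  set Δ : ℝ := D * C - (n:ℝ) * ((n:ℝ) - 2) with hΔdef
  have hΔ2n : 2 * (n:ℝ) ≤ Δ := by nlinarith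
  have hΔpos : 0 < Δ := by nlinarith
  have hW0 : ∀ i : Fin n, (W i) ≠ 0 := fun i => (hW i).ne'
  -- sum of all p i = 1
  have hsum1 : ∑ i, p i = 1 := by
    have : ∑ i, p i = ((∑ i, D / W i) - n * ((n:ℝ) - 2)) / Δ := by
      simp only [hp]
      rw [← Finset.sum_div, Finset.sum_sub_distrib, Finset.sum_const, Finset.card_univ,
        Fintype.card_fin, nsmul_eq_mul]
    rw [this]
    have : ∑ i, D / W i = D * C := by
      rw [hC, Finset.mul_sum]; exact Finset.sum_congr rfl fun i _ => div_eq_mul_inv D (W i)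
    rw [this]
    exact div_self hΔpos.ne'
  -- sum of all p i * W i = 2 D / Δ
  have hsum2 : ∑ i, p i * W i = 2 * D / Δ := by
    have heq : ∀ i : Fin n, p i * W i = (D - ((n:ℝ) - 2) * W i) / Δ := by
      intro i
      rw [hp i, div_mul_eq_mul_div, sub_mul, div_mul_cancel₀ _ (hW0 i)]
    simp only [heq]
    rw [← Finset.sum_div, Finset.sum_sub_distrib, Finset.sum_const, Finset.card_univ,
      Fintype.card_fin, nsmul_eq_mul, ← Finset.mul_sum, ← hD]
    congr 1
    ring
  -- split the erased sum
  have hsplit : ∑ i ∈ Finset.univ.erase istar, p i * (1 + W i / W istar)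
      = (1 - p istar) + (2 * D / Δ - p istar * W istar) / W istar := by
    have e1 : ∑ i ∈ Finset.univ.erase istar, p i = 1 - p istar := by
      rw [← hsum1, Finset.sum_erase_eq_sub (Finset.mem_univ istar)]
    have e2 : ∑ i ∈ Finset.univ.erase istar, p i * W i = 2 * D / Δ - p istar * W istar := by
      rw [← hsum2, Finset.sum_erase_eq_sub (Finset.mem_univ istar)]
    calc ∑ i ∈ Finset.univ.erase istar, p i * (1 + W i / W istar)
        = ∑ i ∈ Finset.univ.erase istar, (p i + p i * W i / W istar) := by
          refine Finset.sum_congr rfl fun i _ => ?_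
          ring
      _ = (∑ i ∈ Finset.univ.erase istar, p i)
          + (∑ i ∈ Finset.univ.erase istar, p i * W i) / W istar := by
          rw [Finset.sum_add_distrib, Finset.sum_div]
      _ = _ := by rw [e1, e2]
  rw [hsplit]
  -- closed form: LHS = 2 + 2(n-2)/Δ
  have hclosed : (1:ℝ) + ((1 - p istar) + (2 * D / Δ - p istar * W istar) / W istar)
      = 2 + 2 * ((n:ℝ) - 2) / Δ := by
    have e3 : (2 * D / Δ - p istar * W istar) / W istar
        = 2 * D / (Δ * W istar) - p istar := by
      rw [sub_div, div_div, mul_div_cancel_right₀ _ (hW0 istar)]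
    have e4 : p istar = D / (W istar * Δ) - ((n:ℝ) - 2) / Δ := by
      rw [hp istar, sub_div, div_div]
    rw [e3, e4]
    ring
  rw [hclosed]
  -- final bound
  have hfrac : 2 * ((n:ℝ) - 2) / Δ ≤ ((n:ℝ) - 2) / n := by
    have hnum : (0:ℝ) ≤ 2 * ((n:ℝ) - 2) := by
      have : (2:ℝ) ≤ n := by exact_mod_cast hn
      nlinarith
    calc 2 * ((n:ℝ) - 2) / Δ ≤ 2 * ((n:ℝ) - 2) / (2 * n) :=
          div_le_div_of_nonneg_left hnum (by positivity) hΔ2n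
      _ = ((n:ℝ) - 2) / n := by
          rw [mul_comm 2 ((n:ℝ) - 2)]
          field_simp
  have : ((n:ℝ) - 2) / n = 1 - 2 / n := by field_simp
  linarith
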